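/- Let G be an (n−k)-regular bipartite false twin-free graph on 2n vertices with bipartition A ∪ B and γ_t(G) = γ_gr^t(G) = 6, let a_1 ≠ a_2 be vertices of A, and set B_2 = N(a_1)\N(a_2), B_1 = N(a_2)\N(a_1), B' = N(a_1) ∩ N(a_2), and A' = {a ∈ A\{a_1,a_2} : N(a) ⊆ B_1 ∪ B_2 ∪ B'}. For a ∈ A' let B_a = B' \ N(a) be the set of non-neighbors of a in B'. Then the family {B_a : a ∈ A'} is a partition of B' into pairwise disjoint nonempty sets, i.e., the sets B_a for a ∈ A' are pairwise disjoint and their union is B'. -/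

import Mathlib

/-- `S` is a total dominating set of `G`: every vertex has a neighbor in `S`. -/
def IsTotalDomSet {V : Type*} (G : SimpleGraph V) (S : Set V) : Prop :=
  ∀ v : V, ∃ u ∈ S, G.Adj v u

/-- `l` is a legal sequence of `G`: the vertices are distinct and every vertex
(except possibly the first) totally dominates a vertex not totally dominated
by the previous vertices. -/
def IsLegalSeq {V : Type*} (G : SimpleGraph V) (l : List V) : Prop :=
  l.Nodup ∧ ∀ i : Fin l.length, 0 < (i : ℕ) →
    ∃ w : V, G.Adj (l.get i) w ∧ ∀ j : Fin l.length, (j : ℕ) < (i : ℕ) → ¬ G.Adj (l.get j) w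

/-- `l` is a total dominating sequence of `G`. -/
def IsTotalDomSeq {V : Type*} (G : SimpleGraph V) (l : List V) : Prop :=
  IsLegalSeq G l ∧ IsTotalDomSet G {v | v ∈ l}

/-- The Grundy total domination number of `G`: the maximum length of a total
dominating sequence. -/
noncomputable def grundyTotalDomNum {V : Type*} (G : SimpleGraph V) : ℕ :=
  sSup {k : ℕ | ∃ l : List V, IsTotalDomSeq G l ∧ l.length = k}

/-- The total domination number of `G`: the minimum cardinality of a total
dominating set. -/
noncomputable def totalDomNum {V : Type*} (G : SimpleGraph V) : ℕ :=
  sInf {k : ℕ | ∃ S : Set V, IsTotalDomSet G S ∧ S.ncard = k}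

/-- `A`, `B` is a bipartition of `G`. -/
def IsBipartitionOf {V : Type*} (G : SimpleGraph V) (A B : Set V) : Prop :=
  (∀ v : V, (v ∈ A ∧ v ∉ B) ∨ (v ∈ B ∧ v ∉ A)) ∧
  ∀ ⦃u v : V⦄, G.Adj u v → (u ∈ A ∧ v ∈ B) ∨ (u ∈ B ∧ v ∈ A)

/-- `G` has no false twins: distinct vertices have distinct open neighborhoods. -/
def FalseTwinFree {V : Type*} (G : SimpleGraph V) : Prop :=
  ∀ u v : V, u ≠ v → G.neighborSet u ≠ G.neighborSet v

/-- `G` has no isolated vertices. -/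
def NoIsolatedVerts {V : Type*} (G : SimpleGraph V) : Prop :=
  ∀ v : V, ∃ u : V, G.Adj v u

/-!
Call `x, y, z` a legal triple on a side `X` of the bipartition. Such triples exist, since otherwise
every vertex of the other side `Y` misses at most one vertex of `X`, and two vertices of `X`
together with a private neighbour of each would be a total dominating set of size 4 < γ_t.

Two facts about the sides follow from γ_gr^t = γ_t = 6, each by exhibiting a legal sequence of
length 7: a legal sequence of vertices of `X` followed by one of vertices of `Y` is legal.
* Every legal triple on `X` dominates `Y`: if `b ∈ Y` escapes it, a neighbour of `b` prolongs the
  triple, and a legal triple on `Y` can follow.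
* No two vertices of `X` dominate `Y`: otherwise greedily adding vertices of `Y` with a private
  neighbour in `X` yields γ_t - 2 of them, which can follow a legal triple on `X`.

By the second fact some `c ∈ B` misses `a₁` and `a₂`; by the first, `A' ∪ {a₁, a₂}` is exactly the
set of non-neighbours of `c` in `A`, and it contains no legal triple. So `B_a = ∅` would force
`N(a₁) ⊆ N(a)` (look at `a₂, a, a₁`), a common `b ∈ B_a ∩ B_a'` would make `a, a', a₁` legal, and
each `b ∈ B'` lies in `B_a` for a vertex `a ∈ A` missing both `b` and `c` (second fact on `B`).
-/

open SimpleGraph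

section

variable {V : Type*} {G : SimpleGraph V}

theorem isLegalSeq_iff {l : List V} :
    IsLegalSeq G l ↔ l.Nodup ∧ ∀ i (hi : i < l.length), 0 < i →
      ∃ w, G.Adj l[i] w ∧ ∀ j (hj : j < i), ¬ G.Adj l[j] w := by
  simp only [IsLegalSeq, Fin.forall_iff, List.get_eq_getElem]
  constructor
  · rintro ⟨hnd, h⟩
    refine ⟨hnd, fun i hi hi0 => ?_⟩
    obtain ⟨w, hw, hj⟩ := h i hi hi0
    exact ⟨w, hw, fun j hj' => hj j (hj'.trans hi) hj'⟩
  · rintro ⟨hnd, h⟩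
    refine ⟨hnd, fun i hi hi0 => ?_⟩
    obtain ⟨w, hw, hj⟩ := h i hi hi0
    exact ⟨w, hw, fun j _ hj' => hj j hj'⟩

theorem isLegalSeq_append_singleton_iff {l : List V} {u : V} :
    IsLegalSeq G (l ++ [u]) ↔
      IsLegalSeq G l ∧ u ∉ l ∧ (l ≠ [] → ∃ w, G.Adj u w ∧ ∀ x ∈ l, ¬ G.Adj x w) := by
  simp only [isLegalSeq_iff, List.nodup_append, List.length_append, List.length_singleton]
  constructor
  · rintro ⟨⟨hnd, -, hu⟩, h⟩
    refine ⟨⟨hnd, fun i hi hi0 => ?_⟩, fun hul => hu u hul u (by simp) rfl, fun hne => ?_⟩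
    · obtain ⟨w, hw, hj⟩ := h i (by omega) hi0
      refine ⟨w, by rwa [List.getElem_append_left hi] at hw, fun j hj' => ?_⟩
      simpa only [List.getElem_append_left (hj'.trans hi)] using hj j hj'
    · obtain ⟨w, hw, hj⟩ := h l.length (by omega) (List.length_pos_iff.2 hne)
      refine ⟨w, by rwa [List.getElem_concat_length rfl] at hw,
        List.forall_mem_iff_getElem.2 fun j hj' => ?_⟩
      simpa only [List.getElem_append_left hj'] using hj j hj'
  · rintro ⟨⟨hnd, h⟩, hu, hfoot⟩
    refine ⟨⟨hnd, List.nodup_singleton u, ?_⟩, fun i hi hi0 => ?_⟩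
    · rintro a ha b hb rfl
      exact hu (List.mem_singleton.1 hb ▸ ha)
    rcases Nat.lt_succ_iff_lt_or_eq.1 hi with hi | rfl
    · obtain ⟨w, hw, hj⟩ := h i hi hi0
      refine ⟨w, by rwa [List.getElem_append_left hi], fun j hj' => ?_⟩
      rw [List.getElem_append_left (hj'.trans hi)]
      exact hj j hj'
    · obtain ⟨w, hw, hj⟩ := hfoot (List.ne_nil_of_length_pos hi0)
      refine ⟨w, by rwa [List.getElem_concat_length rfl], fun j hj' => ?_⟩
      rw [List.getElem_append_left hj']
      exact hj _ (List.getElem_mem _)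

theorem IsLegalSeq.append_singleton {l : List V} {u w : V} (hl : IsLegalSeq G l)
    (hu : u ∉ l) (huw : G.Adj u w) (hw : ∀ x ∈ l, ¬ G.Adj x w) : IsLegalSeq G (l ++ [u]) :=
  isLegalSeq_append_singleton_iff.2 ⟨hl, hu, fun _ => ⟨w, huw, hw⟩⟩

theorem isLegalSeq_nil : IsLegalSeq G [] :=
  ⟨List.nodup_nil, fun i => i.elim0⟩

theorem isLegalSeq_singleton (x : V) : IsLegalSeq G [x] :=
  isLegalSeq_append_singleton_iff.2 ⟨isLegalSeq_nil, List.not_mem_nil, fun h => (h rfl).elim⟩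

namespace IsBipartitionOf

variable {X Y : Set V}

theorem symm (hb : IsBipartitionOf G X Y) : IsBipartitionOf G Y X :=
  ⟨fun v => (hb.1 v).symm, fun _ _ h => (hb.2 h).symm⟩

theorem not_mem_right (hb : IsBipartitionOf G X Y) {v : V} (hv : v ∈ X) : v ∉ Y := by
  rcases hb.1 v with h | h
  · exact h.2
  · exact (h.2 hv).elim

theorem mem_right_of_adj (hb : IsBipartitionOf G X Y) {u v : V} (hu : u ∈ X) (huv : G.Adj u v) :
    v ∈ Y := by
  rcases hb.2 huv with h | h
  · exact h.2
  · exact (hb.not_mem_right hu h.1).elim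

theorem not_adj (hb : IsBipartitionOf G X Y) {u v : V} (hu : u ∈ X) (hv : v ∈ X) :
    ¬ G.Adj u v :=
  fun huv => hb.not_mem_right hv (hb.mem_right_of_adj hu huv)

end IsBipartitionOf

theorem IsLegalSeq.append_of_isBipartitionOf {X Y : Set V} (hb : IsBipartitionOf G X Y)
    (hiso : NoIsolatedVerts G) {l₁ l₂ : List V} (h₁ : IsLegalSeq G l₁) (h₂ : IsLegalSeq G l₂)
    (hX : ∀ v ∈ l₁, v ∈ X) (hY : ∀ v ∈ l₂, v ∈ Y) : IsLegalSeq G (l₁ ++ l₂) := by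
  induction l₂ using List.reverseRecOn with
  | nil => simpa using h₁
  | append_singleton l₂ u ih =>
    obtain ⟨h₂, hu, hfoot⟩ := isLegalSeq_append_singleton_iff.1 h₂
    have huY : u ∈ Y := hY u (by simp)
    obtain ⟨w, huw, hw⟩ : ∃ w, G.Adj u w ∧ ∀ x ∈ l₂, ¬ G.Adj x w := by
      rcases eq_or_ne l₂ [] with rfl | hne
      · obtain ⟨w, huw⟩ := hiso u
        exact ⟨w, huw, by simp⟩
      · exact hfoot hne
    have hwX : w ∈ X := hb.symm.mem_right_of_adj huY huw
    rw [← List.append_assoc]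
    refine (ih h₂ fun v hv => hY v (by simp [hv])).append_singleton ?_ huw ?_
    · simp only [List.mem_append, not_or]
      exact ⟨fun h => hb.not_mem_right (hX u h) huY, hu⟩
    · simp only [List.mem_append]
      rintro x (hx | hx)
      · exact hb.not_adj (hX x hx) hwX
      · exact hw x hx

namespace FalseTwinFree

variable [Finite V] {d : ℕ}

theorem eq_of_neighborSet_subset (hftf : FalseTwinFree G)
    (hreg : ∀ v, (G.neighborSet v).ncard = d) {u v : V}
    (h : G.neighborSet u ⊆ G.neighborSet v) : u = v := by
  by_contra huv
  exact hftf u v huv (Set.eq_of_subset_of_ncard_le h (by rw [hreg, hreg]))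

theorem exists_adj_not_adj (hftf : FalseTwinFree G) (hreg : ∀ v, (G.neighborSet v).ncard = d)
    {u v : V} (huv : u ≠ v) : ∃ w, G.Adj v w ∧ ¬ G.Adj u w := by
  by_contra! h
  exact huv (hftf.eq_of_neighborSet_subset hreg h).symm

theorem noIsolatedVerts (hftf : FalseTwinFree G) (hreg : ∀ v, (G.neighborSet v).ncard = d)
    {u v : V} (huv : u ≠ v) : NoIsolatedVerts G := by
  obtain ⟨w, hvw, -⟩ := hftf.exists_adj_not_adj hreg huv
  intro x
  have : (G.neighborSet x).ncard ≠ 0 := by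
    rw [hreg, ← hreg v]
    exact ((Set.ncard_pos (Set.toFinite _)).2 ⟨w, hvw⟩).ne'
  exact Set.nonempty_of_ncard_ne_zero this

theorem isLegalSeq_triple (hftf : FalseTwinFree G) (hreg : ∀ v, (G.neighborSet v).ncard = d)
    {x y z w : V} (hxy : x ≠ y) (hzw : G.Adj z w) (hxw : ¬ G.Adj x w) (hyw : ¬ G.Adj y w) :
    IsLegalSeq G [x, y, z] := by
  obtain ⟨w', hyw', hxw'⟩ := hftf.exists_adj_not_adj hreg hxy
  have hxy : IsLegalSeq G [x, y] :=
    (isLegalSeq_singleton x).append_singleton (by simpa using hxy.symm) hyw' (by simpa using hxw')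
  refine hxy.append_singleton (w := w) ?_ hzw (by simp [hxw, hyw])
  simp only [List.mem_cons, List.not_mem_nil, or_false]
  rintro (rfl | rfl) <;> contradiction

end FalseTwinFree

theorem totalDomNum_le_ncard {S : Set V} (hS : IsTotalDomSet G S) : totalDomNum G ≤ S.ncard :=
  Nat.sInf_le ⟨S, hS, rfl⟩

theorem IsLegalSeq.exists_isTotalDomSeq [Fintype V] (hiso : NoIsolatedVerts G) {l : List V}
    (hl : IsLegalSeq G l) : ∃ l', IsTotalDomSeq G l' ∧ l.length ≤ l'.length := by
  by_cases hT : IsTotalDomSet G {v | v ∈ l}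
  · exact ⟨l, ⟨hl, hT⟩, le_rfl⟩
  obtain ⟨v, hv⟩ : ∃ v, ∀ x ∈ l, ¬ G.Adj v x := by simpa [IsTotalDomSet] using hT
  obtain ⟨u, hvu⟩ := hiso v
  have hl' : IsLegalSeq G (l ++ [u]) :=
    hl.append_singleton (fun hu => hv u hu hvu) hvu.symm fun x hx hxv => hv x hx hxv.symm
  have hlen : (l ++ [u]).length ≤ Fintype.card V := hl'.1.length_le_card
  obtain ⟨l', hl'', hlen'⟩ := hl'.exists_isTotalDomSeq hiso
  exact ⟨l', hl'', by simp at hlen'; omega⟩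
termination_by Fintype.card V - l.length
decreasing_by simp only [List.length_append, List.length_singleton] at hlen ⊢; omega

theorem IsLegalSeq.length_le_grundyTotalDomNum [Fintype V] (hiso : NoIsolatedVerts G)
    {l : List V} (hl : IsLegalSeq G l) : l.length ≤ grundyTotalDomNum G := by
  obtain ⟨l', hl', hlen⟩ := hl.exists_isTotalDomSeq hiso
  refine hlen.trans (le_csSup ⟨Fintype.card V, ?_⟩ ⟨l', hl', rfl⟩)
  rintro _ ⟨l'', hl'', rfl⟩
  exact hl''.1.1.length_le_card

section Bipartite

variable {X Y : Set V} {d : ℕ}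

theorem totalDomNum_le_four [Finite V] (hb : IsBipartitionOf G X Y) (hftf : FalseTwinFree G)
    (hreg : ∀ v, (G.neighborSet v).ncard = d)
    (huniq : ∀ b ∈ Y, ∀ x ∈ X, ∀ y ∈ X, ¬ G.Adj x b → ¬ G.Adj y b → x = y)
    {x₀ y₀ : V} (hx₀ : x₀ ∈ X) (hy₀ : y₀ ∈ X) (hne : x₀ ≠ y₀) : totalDomNum G ≤ 4 := by
  classical
  obtain ⟨w₁, hy₀w₁, hx₀w₁⟩ := hftf.exists_adj_not_adj hreg hne
  obtain ⟨w₂, hx₀w₂, hy₀w₂⟩ := hftf.exists_adj_not_adj hreg hne.symm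
  have hw₁ := hb.mem_right_of_adj hy₀ hy₀w₁
  have hw₂ := hb.mem_right_of_adj hx₀ hx₀w₂
  have hS : IsTotalDomSet G (({x₀, y₀, w₁, w₂} : Finset V) : Set V) := by
    intro v
    by_contra! h
    simp only [Finset.coe_insert, Finset.coe_singleton, Set.mem_insert_iff,
      Set.mem_singleton_iff, forall_eq_or_imp, forall_eq] at h
    rcases hb.1 v with ⟨hv, -⟩ | ⟨hv, -⟩
    · exact hne ((huniq w₁ hw₁ x₀ hx₀ v hv hx₀w₁ h.2.2.1).trans
        (huniq w₂ hw₂ v hv y₀ hy₀ h.2.2.2 hy₀w₂))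
    · exact hne (huniq v hv x₀ hx₀ y₀ hy₀ (fun h' => h.1 h'.symm) fun h' => h.2.1 h'.symm)
  exact (totalDomNum_le_ncard hS).trans ((Set.ncard_coe_finset _).trans_le Finset.card_le_four)

theorem exists_isLegalSeq_triple [Finite V] (hb : IsBipartitionOf G X Y)
    (hiso : NoIsolatedVerts G) (hftf : FalseTwinFree G) (hreg : ∀ v, (G.neighborSet v).ncard = d)
    (ht : 4 < totalDomNum G) {x₀ y₀ : V} (hx₀ : x₀ ∈ X) (hy₀ : y₀ ∈ X) (hne : x₀ ≠ y₀) :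
    ∃ x ∈ X, ∃ y ∈ X, ∃ z ∈ X, IsLegalSeq G [x, y, z] := by
  by_contra! h
  refine (totalDomNum_le_four hb hftf hreg ?_ hx₀ hy₀ hne).not_gt ht
  intro b hbY x hx y hy hxb hyb
  by_contra hxy
  obtain ⟨z, hbz⟩ := hiso b
  exact h x hx y hy z (hb.symm.mem_right_of_adj hbY hbz)
    (hftf.isLegalSeq_triple hreg hxy hbz.symm hxb hyb)

theorem exists_isLegalSeq_of_forall_exists_adj (hb : IsBipartitionOf G X Y)
    (hiso : NoIsolatedVerts G) {S : Set V} (hS : ∀ b ∈ Y, ∃ s ∈ S, G.Adj b s) :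
    ∃ l : List V, (∀ v ∈ l, v ∈ Y) ∧ IsLegalSeq G l ∧ totalDomNum G ≤ l.length + S.ncard := by
  classical
  suffices ∀ m ≤ totalDomNum G - S.ncard,
      ∃ l : List V, (∀ v ∈ l, v ∈ Y) ∧ IsLegalSeq G l ∧ l.length = m by
    obtain ⟨l, hlY, hl, hlen⟩ := this _ le_rfl
    exact ⟨l, hlY, hl, by omega⟩
  intro m
  induction m with
  | zero => exact fun _ => ⟨[], by simp, isLegalSeq_nil, rfl⟩
  | succ m ih =>
    intro hm
    obtain ⟨l, hlY, hl, rfl⟩ := ih (by omega)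
    have hcard : (S ∪ {v | v ∈ l}).ncard < totalDomNum G := by
      have := (Set.ncard_union_le S {v | v ∈ l}).trans (Nat.add_le_add_left
        ((List.coe_toFinset l ▸ Set.ncard_coe_finset _).trans_le l.toFinset_card_le) _)
      omega
    obtain ⟨v, hv⟩ : ∃ v, ∀ s ∈ S ∪ {v | v ∈ l}, ¬ G.Adj v s := by
      by_contra! h
      exact (totalDomNum_le_ncard h).not_gt hcard
    have hvX : v ∈ X := by
      rcases hb.1 v with ⟨hvX, -⟩ | ⟨hvY, -⟩
      · exact hvX
      · obtain ⟨s, hs, hvs⟩ := hS v hvY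
        exact (hv s (Or.inl hs) hvs).elim
    obtain ⟨b, hvb⟩ := hiso v
    refine ⟨l ++ [b], ?_, hl.append_singleton (fun hbl => hv b (Or.inr hbl) hvb) hvb.symm
      fun x hx hxv => hv x (Or.inr hx) hxv.symm, by simp⟩
    simpa [or_imp, forall_and] using ⟨hlY, hb.mem_right_of_adj hvX hvb⟩

theorem exists_not_adj_not_adj [Fintype V] (hb : IsBipartitionOf G X Y)
    (hiso : NoIsolatedVerts G) (hftf : FalseTwinFree G) (hreg : ∀ v, (G.neighborSet v).ncard = d)
    (ht : 4 < totalDomNum G) (hg : grundyTotalDomNum G ≤ totalDomNum G)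
    {u u' : V} (hu : u ∈ X) (hu' : u' ∈ X) (hne : u ≠ u') :
    ∃ c ∈ Y, ¬ G.Adj u c ∧ ¬ G.Adj u' c := by
  by_contra! hdom
  obtain ⟨l, hlY, hl, hlen⟩ := exists_isLegalSeq_of_forall_exists_adj hb hiso (S := {u, u'})
    fun b hbY => by
      by_cases hub : G.Adj u b
      · exact ⟨u, by simp, hub.symm⟩
      · exact ⟨u', by simp, (hdom b hbY hub).symm⟩
  obtain ⟨x, hx, y, hy, z, hz, hxyz⟩ := exists_isLegalSeq_triple hb hiso hftf hreg ht hu hu' hne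
  have := ((hxyz.append_of_isBipartitionOf hb hiso hl (by simp [hx, hy, hz]) hlY)
    ).length_le_grundyTotalDomNum hiso
  rw [Set.ncard_pair hne] at hlen
  simp only [List.length_append, List.length_cons, List.length_nil] at this
  omega

theorem adj_or_adj_or_adj_of_isLegalSeq [Fintype V] (hb : IsBipartitionOf G X Y)
    (hiso : NoIsolatedVerts G) (hftf : FalseTwinFree G) (hreg : ∀ v, (G.neighborSet v).ncard = d)
    (ht : 4 < totalDomNum G) (hg : grundyTotalDomNum G ≤ 6)
    {x y z b : V} (hxyz : IsLegalSeq G [x, y, z]) (hx : x ∈ X) (hy : y ∈ X) (hz : z ∈ X)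
    (hbY : b ∈ Y) : G.Adj x b ∨ G.Adj y b ∨ G.Adj z b := by
  by_contra! h
  obtain ⟨hxb, hyb, hzb⟩ := h
  obtain ⟨z', hbz'⟩ := hiso b
  have hz' : z' ∈ X := hb.symm.mem_right_of_adj hbY hbz'
  have hxyzz' : IsLegalSeq G ([x, y, z] ++ [z']) := by
    refine hxyz.append_singleton (w := b) ?_ hbz'.symm (by simp [hxb, hyb, hzb])
    simp only [List.mem_cons, List.not_mem_nil, or_false]
    rintro (rfl | rfl | rfl) <;> exact absurd hbz'.symm ‹_›
  obtain ⟨w, hxw⟩ := hiso x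
  obtain ⟨p, hp, q, hq, r, hr, hpqr⟩ := exists_isLegalSeq_triple hb.symm hiso hftf hreg ht hbY
    (hb.mem_right_of_adj hx hxw) (fun hbw => hxb (hbw ▸ hxw))
  have := (hxyzz'.append_of_isBipartitionOf hb hiso hpqr (by simp [hx, hy, hz, hz'])
    (by simp [hp, hq, hr])).length_le_grundyTotalDomNum hiso
  simp only [List.length_append, List.length_cons, List.length_nil] at this
  omega

end Bipartite

section DominatedByLegalTriples

variable [Finite V] {X : Set V} {c a₁ a₂ : V} {d : ℕ}

theorem neighborSet_subset_union_iff_not_adj (hftf : FalseTwinFree G)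
    (hreg : ∀ v, (G.neighborSet v).ncard = d)
    (hdom : ∀ x ∈ X, ∀ y ∈ X, ∀ z ∈ X, IsLegalSeq G [x, y, z] → G.Adj x c ∨ G.Adj y c ∨ G.Adj z c)
    (ha₁ : a₁ ∈ X) (ha₂ : a₂ ∈ X) (hne : a₁ ≠ a₂) (hc₁ : ¬ G.Adj a₁ c) (hc₂ : ¬ G.Adj a₂ c)
    {a : V} (ha : a ∈ X) : G.neighborSet a ⊆ G.neighborSet a₁ ∪ G.neighborSet a₂ ↔ ¬ G.Adj a c := by
  refine ⟨fun h hac => (h hac).elim hc₁ hc₂, fun hac t (hat : G.Adj a t) => ?_⟩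
  by_contra ht
  simp only [Set.mem_union, mem_neighborSet, not_or] at ht
  rcases hdom a₁ ha₁ a₂ ha₂ a ha (hftf.isLegalSeq_triple hreg hne hat ht.1 ht.2) with h | h | h <;>
    contradiction

theorem exists_adj_adj_not_adj (hftf : FalseTwinFree G)
    (hreg : ∀ v, (G.neighborSet v).ncard = d)
    (hdom : ∀ x ∈ X, ∀ y ∈ X, ∀ z ∈ X, IsLegalSeq G [x, y, z] → G.Adj x c ∨ G.Adj y c ∨ G.Adj z c)
    (ha₁ : a₁ ∈ X) (ha₂ : a₂ ∈ X) (hc₁ : ¬ G.Adj a₁ c) (hc₂ : ¬ G.Adj a₂ c)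
    {a : V} (ha : a ∈ X) (ha₁ne : a ≠ a₁) (ha₂ne : a ≠ a₂) (hac : ¬ G.Adj a c) :
    ∃ b, G.Adj a₁ b ∧ G.Adj a₂ b ∧ ¬ G.Adj a b := by
  by_contra! h
  refine ha₁ne (hftf.eq_of_neighborSet_subset hreg fun t (ht : G.Adj a₁ t) => ?_).symm
  by_contra hat
  have ha₂t : ¬ G.Adj a₂ t := fun h' => hat (h t ht h')
  rcases hdom a₂ ha₂ a ha a₁ ha₁ (hftf.isLegalSeq_triple hreg ha₂ne.symm ht ha₂t hat) with
    h | h | h <;> contradiction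

theorem adj_or_adj_of_adj (hftf : FalseTwinFree G) (hreg : ∀ v, (G.neighborSet v).ncard = d)
    (hdom : ∀ x ∈ X, ∀ y ∈ X, ∀ z ∈ X, IsLegalSeq G [x, y, z] → G.Adj x c ∨ G.Adj y c ∨ G.Adj z c)
    (ha₁ : a₁ ∈ X) (hc₁ : ¬ G.Adj a₁ c) {a a' b : V} (ha : a ∈ X) (ha' : a' ∈ X) (hne : a ≠ a')
    (hac : ¬ G.Adj a c) (ha'c : ¬ G.Adj a' c) (hb : G.Adj a₁ b) : G.Adj a b ∨ G.Adj a' b := by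
  by_contra! h
  rcases hdom a ha a' ha' a₁ ha₁ (hftf.isLegalSeq_triple hreg hne hb h.1 h.2) with h | h | h <;>
    contradiction

end DominatedByLegalTriples

end

theorem claim_partition_general
    {V : Type*} [Fintype V] (G : SimpleGraph V) (n k : ℕ) (A B : Set V)
    (hbip : IsBipartitionOf G A B) (hftf : FalseTwinFree G)
    (hreg : ∀ v : V, (G.neighborSet v).ncard = n - k)
    (ht : totalDomNum G = 6) (hg : grundyTotalDomNum G = 6)
    (a₁ a₂ : V) (ha₁ : a₁ ∈ A) (ha₂ : a₂ ∈ A) (hne : a₁ ≠ a₂)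
    (B₁ B₂ B' A' : Set V)
    (hB₂ : B₂ = G.neighborSet a₁ \ G.neighborSet a₂)
    (hB₁ : B₁ = G.neighborSet a₂ \ G.neighborSet a₁)
    (hB' : B' = G.neighborSet a₁ ∩ G.neighborSet a₂)
    (hA' : A' = {a ∈ A \ {a₁, a₂} | G.neighborSet a ⊆ B₁ ∪ B₂ ∪ B'})
    :
    (∀ a ∈ A', (B' \ G.neighborSet a).Nonempty) ∧
    (∀ a ∈ A', ∀ a' ∈ A', a ≠ a' →
      Disjoint (B' \ G.neighborSet a) (B' \ G.neighborSet a')) ∧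
    (⋃ a ∈ A', B' \ G.neighborSet a) = B' := by
  have hiso := hftf.noIsolatedVerts hreg hne
  obtain ⟨c, hcB, hc₁, hc₂⟩ :=
    exists_not_adj_not_adj hbip hiso hftf hreg (by omega) (by omega) ha₁ ha₂ hne
  have hdom : ∀ x ∈ A, ∀ y ∈ A, ∀ z ∈ A, IsLegalSeq G [x, y, z] →
      G.Adj x c ∨ G.Adj y c ∨ G.Adj z c := fun x hx y hy z hz hl =>
    adj_or_adj_or_adj_of_isLegalSeq hbip hiso hftf hreg (by omega) hg.le hl hx hy hz hcB
  have hA'c : ∀ a, a ∈ A' ↔ a ∈ A ∧ a ≠ a₁ ∧ a ≠ a₂ ∧ ¬ G.Adj a c := by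
    intro a
    have hunion : B₁ ∪ B₂ ∪ B' = G.neighborSet a₁ ∪ G.neighborSet a₂ := by
      ext; simp only [hB₁, hB₂, hB', Set.mem_union, Set.mem_sdiff, Set.mem_inter_iff]; tauto
    simp only [hA', hunion, Set.mem_ofPred_eq, Set.mem_sdiff, Set.mem_insert_iff,
      Set.mem_singleton_iff, not_or, and_assoc]
    exact and_congr_right fun ha => and_congr_right fun _ => and_congr_right fun _ =>
      neighborSet_subset_union_iff_not_adj hftf hreg hdom ha₁ ha₂ hne hc₁ hc₂ ha
  subst hB'
  refine ⟨fun a ha => ?_, fun a ha a' ha' haa' => ?_, ?_⟩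
  · obtain ⟨haA, ha₁ne, ha₂ne, hac⟩ := (hA'c a).1 ha
    obtain ⟨b, hb₁, hb₂, hab⟩ :=
      exists_adj_adj_not_adj hftf hreg hdom ha₁ ha₂ hc₁ hc₂ haA ha₁ne ha₂ne hac
    exact ⟨b, ⟨hb₁, hb₂⟩, hab⟩
  · obtain ⟨haA, -, -, hac⟩ := (hA'c a).1 ha
    obtain ⟨ha'A, -, -, ha'c⟩ := (hA'c a').1 ha'
    refine Set.disjoint_left.2 fun b hb hb' => ?_
    exact (adj_or_adj_of_adj hftf hreg hdom ha₁ hc₁ haA ha'A haa' hac ha'c hb.1.1).elim hb.2 hb'.2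
  · refine Set.Subset.antisymm (Set.iUnion₂_subset fun _ _ => Set.sdiff_subset) fun b hb => ?_
    obtain ⟨hb₁, hb₂⟩ := hb
    obtain ⟨y, hyA, hby, hcy⟩ := exists_not_adj_not_adj hbip.symm hiso hftf hreg (by omega)
      (by omega) (hbip.mem_right_of_adj ha₁ hb₁) hcB fun h => hc₁ (h ▸ hb₁)
    have hyA' := (hA'c y).2 ⟨hyA, fun h => hby (h ▸ hb₁.symm), fun h => hby (h ▸ hb₂.symm),
      fun h => hcy h.symm⟩
    exact Set.mem_biUnion hyA' ⟨⟨hb₁, hb₂⟩, fun h => hby h.symm⟩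

/-- The sets `B_a = B' \ N(a)` of non-neighbors in `B'` of the
vertices `a ∈ A'` are nonempty, pairwise disjoint, and partition `B'`. -/
theorem claim_partition
    {V : Type*} [Fintype V] (G : SimpleGraph V) (n k : ℕ) (A B : Set V)
    (hbip : IsBipartitionOf G A B) (hftf : FalseTwinFree G)
    (hcard : Fintype.card V = 2 * n)
    (hreg : ∀ v : V, (G.neighborSet v).ncard = n - k)
    (ht : totalDomNum G = 6) (hg : grundyTotalDomNum G = 6)
    (a₁ a₂ : V) (ha₁ : a₁ ∈ A) (ha₂ : a₂ ∈ A) (hne : a₁ ≠ a₂)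
    (B₁ B₂ B' A' : Set V)
    (hB₂ : B₂ = G.neighborSet a₁ \ G.neighborSet a₂)
    (hB₁ : B₁ = G.neighborSet a₂ \ G.neighborSet a₁)
    (hB' : B' = G.neighborSet a₁ ∩ G.neighborSet a₂)
    (hA' : A' = {a ∈ A \ {a₁, a₂} | G.neighborSet a ⊆ B₁ ∪ B₂ ∪ B'})
    :
    (∀ a ∈ A', (B' \ G.neighborSet a).Nonempty) ∧
    (∀ a ∈ A', ∀ a' ∈ A', a ≠ a' →
      Disjoint (B' \ G.neighborSet a) (B' \ G.neighborSet a')) ∧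
    (⋃ a ∈ A', B' \ G.neighborSet a) = B' :=
  claim_partition_general G n k A B hbip hftf hreg ht hg a₁ a₂ ha₁ ha₂ hne B₁ B₂ B' A' hB₂ hB₁ hB'
    hA'
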